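/- arXiv:1501.07465 — 2 statements merged into one kernel-verified Lean document; each statement's English description precedes it below -/
import Mathlib

section
/- For smooth vector fields v, g on D̄ ⊂ ℝ³ and a constant σ > 0, the pointwise identity div((∇v)g − σ(∇v)ᵀg − (div v)g) = (∇v)ᵀ : ∇g − σ ∇v : ∇g − (div v)(div g) holds, provided div v is constant and each component of v is harmonic (Δv = 0) in D. -/
/-- Partial derivative in the `i`-th coordinate direction on `ℝ³ = Fin 3 → ℝ`. -/
noncomputable def pd (i : Fin 3) (f : (Fin 3 → ℝ) → ℝ) (x : Fin 3 → ℝ) : ℝ :=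
  fderiv ℝ f x (Pi.single i 1)

/-- The Laplacian. -/
noncomputable def lap (f : (Fin 3 → ℝ) → ℝ) (x : Fin 3 → ℝ) : ℝ :=
  ∑ i : Fin 3, pd i (fun y => pd i f y) x

/-- Jacobian matrix `(∇v)_{ij} = ∂v_i/∂x_j` of a vector field. -/
noncomputable def jac (v : (Fin 3 → ℝ) → (Fin 3 → ℝ)) (x : Fin 3 → ℝ) :
    Matrix (Fin 3) (Fin 3) ℝ :=
  fun i j => pd j (fun y => v y i) x

/-- Divergence of a vector field. -/
noncomputable def dvg (v : (Fin 3 → ℝ) → (Fin 3 → ℝ)) (x : Fin 3 → ℝ) : ℝ :=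
  ∑ i : Fin 3, jac v x i i

section helpers

variable {f h : (Fin 3 → ℝ) → ℝ} {x : Fin 3 → ℝ}

lemma pd_contDiffAt (hf : ContDiffAt ℝ (⊤ : ℕ∞) f x) (i : Fin 3) :
    ContDiffAt ℝ (⊤ : ℕ∞) (pd i f) x := by
  have h1 : ContDiffAt ℝ (⊤ : ℕ∞) (fderiv ℝ f) x := hf.fderiv_right (by simp)
  exact h1.clm_apply contDiffAt_const

lemma pd_congr_nhds {i : Fin 3} (hfh : f =ᶠ[nhds x] h) : pd i f x = pd i h x := by
  unfold pd; rw [hfh.fderiv_eq]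

lemma pd_const {i : Fin 3} (c : ℝ) : pd i (fun _ => c) x = 0 := by
  unfold pd; simp

lemma pd_sub {i : Fin 3} (hf : DifferentiableAt ℝ f x) (hh : DifferentiableAt ℝ h x) :
    pd i (fun y => f y - h y) x = pd i f x - pd i h x := by
  unfold pd; rw [fderiv_fun_sub hf hh]; simp

lemma pd_mul {i : Fin 3} (hf : DifferentiableAt ℝ f x) (hh : DifferentiableAt ℝ h x) :
    pd i (fun y => f y * h y) x = f x * pd i h x + h x * pd i f x := by
  unfold pd; rw [fderiv_fun_mul hf hh]; simp

lemma pd_const_mul {i : Fin 3} (c : ℝ) (hh : DifferentiableAt ℝ h x) :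
    pd i (fun y => c * h y) x = c * pd i h x := by
  unfold pd; rw [fderiv_const_mul hh]; simp

lemma pd_sum {i : Fin 3} {ι : Type*} (s : Finset ι) {F : ι → (Fin 3 → ℝ) → ℝ}
    (hF : ∀ j ∈ s, DifferentiableAt ℝ (F j) x) :
    pd i (fun y => ∑ j ∈ s, F j y) x = ∑ j ∈ s, pd i (F j) x := by
  unfold pd; rw [fderiv_fun_sum hF]; simp

lemma pd_pd (hf : ContDiffAt ℝ (⊤ : ℕ∞) f x) (a b : Fin 3) :
    pd a (pd b f) x = fderiv ℝ (fderiv ℝ f) x (Pi.single a 1) (Pi.single b 1) := by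
  have hd : DifferentiableAt ℝ (fderiv ℝ f) x :=
    (hf.fderiv_right (m := (⊤ : ℕ∞)) (by simp)).differentiableAt (by simp)
  have := fderiv_clm_apply (c := fderiv ℝ f)
    (u := fun _ => (Pi.single b 1 : Fin 3 → ℝ)) hd (differentiableAt_const _)
  unfold pd
  rw [show (fun y => (fderiv ℝ f y) (Pi.single b 1)) =
      fun y => (fderiv ℝ f y) ((fun _ => (Pi.single b 1 : Fin 3 → ℝ)) y) from rfl, this]
  simp

lemma pd_comm (hf : ContDiffAt ℝ (⊤ : ℕ∞) f x) (a b : Fin 3) :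
    pd a (pd b f) x = pd b (pd a f) x := by
  rw [pd_pd hf a b, pd_pd hf b a]
  exact (hf.isSymmSndFDerivAt (by rw [minSmoothness_of_isRCLikeNormedField]; exact WithTop.coe_le_coe.mpr (le_top : (2 : ℕ∞) ≤ ⊤))) _ _

end helpers

/-- for smooth vector fields `v, g` with `div v` constant and each
component of `v` harmonic, `div((∇v)g − σ(∇v)ᵀg − (div v)g)
= ∇vᵀ : ∇g − σ ∇v : ∇g − (div v)(div g)` pointwise in `D`. -/
theorem divergence_identity (D : Set (Fin 3 → ℝ)) (hD : IsOpen D)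
    (σ C : ℝ) (hσ : 0 < σ)
    (v g : (Fin 3 → ℝ) → (Fin 3 → ℝ))
    (hv : ContDiffOn ℝ (⊤ : ℕ∞) v D) (hg : ContDiffOn ℝ (⊤ : ℕ∞) g D)
    (hdiv : ∀ x ∈ D, dvg v x = C)
    (hharm : ∀ x ∈ D, ∀ i, lap (fun y => v y i) x = 0) :
    ∀ x ∈ D,
      dvg (fun y i => (∑ j, jac v y i j * g y j)
            - σ * (∑ j, jac v y j i * g y j) - dvg v y * g y i) x
        = (∑ i, ∑ j, jac v x j i * jac g x i j)
          - σ * (∑ i, ∑ j, jac v x i j * jac g x i j)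
          - dvg v x * dvg g x := by
  intro x hx
  have hxD : D ∈ nhds x := hD.mem_nhds hx
  have hvx : ContDiffAt ℝ (⊤ : ℕ∞) v x := hv.contDiffAt hxD
  have hgx : ContDiffAt ℝ (⊤ : ℕ∞) g x := hg.contDiffAt hxD
  have hvc : ∀ i, ContDiffAt ℝ (⊤ : ℕ∞) (fun y => v y i) x := fun i => contDiffAt_pi.mp hvx i
  have hgc : ∀ i, ContDiffAt ℝ (⊤ : ℕ∞) (fun y => g y i) x := fun i => contDiffAt_pi.mp hgx i
  -- jac entries as pd
  have hjv : ∀ a b : Fin 3, (fun y => jac v y a b) = pd b (fun y => v y a) := fun a b => rfl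
  have hJv : ∀ a b : Fin 3, ContDiffAt ℝ (⊤ : ℕ∞) (fun y => jac v y a b) x :=
    fun a b => pd_contDiffAt (hvc a) b
  have dJv : ∀ a b : Fin 3, DifferentiableAt ℝ (fun y => jac v y a b) x :=
    fun a b => (hJv a b).differentiableAt (by simp)
  have dg : ∀ a : Fin 3, DifferentiableAt ℝ (fun y => g y a) x :=
    fun a => (hgc a).differentiableAt (by simp)
  -- dvg v is eventually C near x
  have hdveq : (dvg v) =ᶠ[nhds x] fun _ => C := by
    filter_upwards [hxD] with y hy using hdiv y hy
  -- component functions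
  set A : Fin 3 → (Fin 3 → ℝ) → ℝ := fun i y => ∑ j, jac v y i j * g y j with hA
  set B : Fin 3 → (Fin 3 → ℝ) → ℝ := fun i y => ∑ j, jac v y j i * g y j with hB
  have dA : ∀ i, DifferentiableAt ℝ (A i) x := fun i =>
    DifferentiableAt.fun_sum (fun j _ => (dJv i j).mul (dg j))
  have dB : ∀ i, DifferentiableAt ℝ (B i) x := fun i =>
    DifferentiableAt.fun_sum (fun j _ => (dJv j i).mul (dg j))
  -- the per-component derivative
  have key : ∀ i : Fin 3,
      pd i (fun y => A i y - σ * B i y - dvg v y * g y i) x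
        = (∑ j, (jac v x i j * jac g x j i + g x j * pd i (fun y => jac v y i j) x))
          - σ * (∑ j, (jac v x j i * jac g x j i + g x j * pd i (fun y => jac v y j i) x))
          - C * jac g x i i := by
    intro i
    have hcongr : (fun y => A i y - σ * B i y - dvg v y * g y i)
        =ᶠ[nhds x] fun y => A i y - σ * B i y - C * g y i := by
      filter_upwards [hxD] with y hy
      rw [hdiv y hy]
    rw [pd_congr_nhds hcongr]
    rw [pd_sub (((dA i).fun_sub ((dB i).const_mul σ))) ((dg i).const_mul C),
        pd_sub (dA i) ((dB i).const_mul σ), pd_const_mul σ (dB i),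
        pd_const_mul C (dg i)]
    have hpA : pd i (A i) x
        = ∑ j, (jac v x i j * jac g x j i + g x j * pd i (fun y => jac v y i j) x) := by
      rw [hA]
      rw [pd_sum (Finset.univ) (fun j _ => (dJv i j).fun_mul (dg j))]
      refine Finset.sum_congr rfl fun j _ => ?_
      rw [pd_mul (dJv i j) (dg j)]
      rfl
    have hpB : pd i (B i) x
        = ∑ j, (jac v x j i * jac g x j i + g x j * pd i (fun y => jac v y j i) x) := by
      rw [hB]
      rw [pd_sum (Finset.univ) (fun j _ => (dJv j i).fun_mul (dg j))]
      refine Finset.sum_congr rfl fun j _ => ?_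
      rw [pd_mul (dJv j i) (dg j)]
      rfl
    rw [hpA, hpB]
    rfl
  -- assemble the divergence
  have hd : dvg (fun y i => A i y - σ * B i y - dvg v y * g y i) x
      = ∑ i : Fin 3, pd i (fun y => A i y - σ * B i y - dvg v y * g y i) x := rfl
  rw [show (fun y i => (∑ j, jac v y i j * g y j)
            - σ * (∑ j, jac v y j i * g y j) - dvg v y * g y i)
      = fun y i => A i y - σ * B i y - dvg v y * g y i from rfl, hd]
  simp only [key]
  rw [Finset.sum_sub_distrib, Finset.sum_sub_distrib]
  -- second-derivative terms vanish
  have hAsnd : ∑ i : Fin 3, ∑ j : Fin 3, g x j * pd i (fun y => jac v y i j) x = 0 := by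
    rw [Finset.sum_comm]
    have : ∀ j : Fin 3, ∑ i : Fin 3, g x j * pd i (fun y => jac v y i j) x
        = g x j * pd j (dvg v) x := by
      intro j
      rw [← Finset.mul_sum]
      congr 1
      have : ∀ i : Fin 3, pd i (fun y => jac v y i j) x = pd j (pd i (fun y => v y i)) x := by
        intro i
        rw [hjv i j]
        exact pd_comm (hvc i) i j
      rw [Finset.sum_congr rfl fun i _ => this i]
      rw [show dvg v = fun y => ∑ i : Fin 3, pd i (fun z => v z i) y from rfl]
      rw [pd_sum (Finset.univ)
        (fun i _ => (pd_contDiffAt (hvc i) i).differentiableAt (by simp))]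
    rw [Finset.sum_congr rfl fun j _ => this j]
    have hz : ∀ j : Fin 3, pd j (dvg v) x = 0 := by
      intro j
      rw [pd_congr_nhds hdveq, pd_const]
    simp [hz]
  have hBsnd : ∑ i : Fin 3, ∑ j : Fin 3, g x j * pd i (fun y => jac v y j i) x = 0 := by
    rw [Finset.sum_comm]
    have : ∀ j : Fin 3, ∑ i : Fin 3, g x j * pd i (fun y => jac v y j i) x
        = g x j * lap (fun y => v y j) x := by
      intro j
      rw [← Finset.mul_sum]
      rfl
    rw [Finset.sum_congr rfl fun j _ => this j]
    simp [hharm x hx]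
  rw [← Finset.mul_sum]
  simp only [Finset.sum_add_distrib]
  rw [hAsnd, hBsnd]
  have e1 : ∑ i : Fin 3, ∑ j : Fin 3, jac v x i j * jac g x j i
      = ∑ i : Fin 3, ∑ j : Fin 3, jac v x j i * jac g x i j := Finset.sum_comm
  have e2 : ∑ i : Fin 3, ∑ j : Fin 3, jac v x j i * jac g x j i
      = ∑ i : Fin 3, ∑ j : Fin 3, jac v x i j * jac g x i j := Finset.sum_comm
  have e3 : ∑ i : Fin 3, C * jac g x i i = dvg v x * dvg g x := by
    rw [← Finset.mul_sum, hdiv x hx]; rfl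
  rw [e1, e2, e3]
  ring
end

section
/- Let M₋, M₊ be 3×3 real matrices, ν a unit vector and {ν, t₁, t₂} an orthonormal basis. Suppose (i) M₊ is symmetric, (ii) M₋ t_j = M₊ t_j for j = 1,2 (tangential components agree), and (iii) σ M₋ ν = M₊ ν for a constant σ (flux condition, with σ_s = 1, σ_c = σ). Then (M₋ᵀ − σ M₋)ν = (Tr M₋ − Tr M₊) ν. -/
open Matrix

/-- if `M₊` (here `Mp`) is symmetric, the tangential components of
`M₋` (here `Mm`) and `M₊` agree, and `σ M₋ ν = M₊ ν`, then
`(M₋ᵀ − σ M₋)ν = (Tr M₋ − Tr M₊) ν`. -/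
theorem jump_relation (Mm Mp : Matrix (Fin 3) (Fin 3) ℝ) (σ : ℝ)
    (ν t₁ t₂ : Fin 3 → ℝ)
    (hνν : ν ⬝ᵥ ν = 1) (ht₁t₁ : t₁ ⬝ᵥ t₁ = 1) (ht₂t₂ : t₂ ⬝ᵥ t₂ = 1)
    (hνt₁ : ν ⬝ᵥ t₁ = 0) (hνt₂ : ν ⬝ᵥ t₂ = 0) (ht₁t₂ : t₁ ⬝ᵥ t₂ = 0)
    (hsym : Mp.IsSymm)
    (htan₁ : Mm.mulVec t₁ = Mp.mulVec t₁) (htan₂ : Mm.mulVec t₂ = Mp.mulVec t₂)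
    (hflux : σ • Mm.mulVec ν = Mp.mulVec ν) :
    (Mm.transpose - σ • Mm).mulVec ν = (Mm.trace - Mp.trace) • ν := by
  set Q : Matrix (Fin 3) (Fin 3) ℝ := Matrix.of ![ν, t₁, t₂] with hQ
  have hd : ∀ v w : Fin 3 → ℝ, v ⬝ᵥ w = v 0 * w 0 + v 1 * w 1 + v 2 * w 2 := by
    intro v w; simp [dotProduct, Fin.sum_univ_three]
  have hνν' := hνν; have ht₁t₁' := ht₁t₁; have ht₂t₂' := ht₂t₂
  have hνt₁' := hνt₁; have hνt₂' := hνt₂; have ht₁t₂' := ht₁t₂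
  rw [hd] at hνν' ht₁t₁' ht₂t₂' hνt₁' hνt₂' ht₁t₂'
  have hQQ : Q * Qᵀ = 1 := by
    ext i j
    fin_cases i <;> fin_cases j <;>
      simp [hQ, Matrix.mul_apply, Matrix.transpose_apply, Matrix.one_apply,
        Fin.sum_univ_three, Matrix.vecHead, Matrix.vecTail] <;>
      linarith [hνν', ht₁t₁', ht₂t₂', hνt₁', hνt₂', ht₁t₂']
  have hQtQ : Qᵀ * Q = 1 := mul_eq_one_comm.mp hQQ
  have htr : ∀ M : Matrix (Fin 3) (Fin 3) ℝ,
      M.trace = ν ⬝ᵥ M.mulVec ν + t₁ ⬝ᵥ M.mulVec t₁ + t₂ ⬝ᵥ M.mulVec t₂ := by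
    intro M
    have h1 : (Q * M * Qᵀ).trace = M.trace := by
      rw [Matrix.trace_mul_cycle, hQtQ, Matrix.one_mul]
    rw [← h1]
    simp [hQ, Matrix.trace, Matrix.diag, Fin.sum_univ_three, Matrix.mul_apply,
      Matrix.transpose_apply, Matrix.mulVec, dotProduct, Matrix.vecHead,
      Matrix.vecTail, Matrix.vecMul]
    ring
  have hinj : ∀ x y : Fin 3 → ℝ, Q.mulVec x = Q.mulVec y → x = y := by
    intro x y h
    have h2 := congrArg (Qᵀ.mulVec) h
    simpa [Matrix.mulVec_mulVec, hQtQ, Matrix.one_mulVec] using h2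
  apply hinj
  have hcomp : ∀ x : Fin 3 → ℝ, Q.mulVec x = ![ν ⬝ᵥ x, t₁ ⬝ᵥ x, t₂ ⬝ᵥ x] := by
    intro x
    ext i; fin_cases i <;> simp [hQ, Matrix.mulVec, dotProduct]
  rw [hcomp, hcomp]
  have key₁ : ν ⬝ᵥ Mm.transpose.mulVec ν = ν ⬝ᵥ Mm.mulVec ν := by
    rw [Matrix.dotProduct_mulVec, Matrix.vecMul_transpose, dotProduct_comm]
  have keyt : ∀ t : Fin 3 → ℝ, Mm.mulVec t = Mp.mulVec t →
      t ⬝ᵥ Mm.transpose.mulVec ν = σ * (t ⬝ᵥ Mm.mulVec ν) := by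
    intro t ht
    have h1 : t ⬝ᵥ Mm.transpose.mulVec ν = Mm.mulVec t ⬝ᵥ ν := by
      rw [Matrix.dotProduct_mulVec, Matrix.vecMul_transpose]
    rw [h1, ht, dotProduct_comm, Matrix.dotProduct_mulVec,
      ← Matrix.mulVec_transpose, hsym.eq, ← hflux]
    simp [smul_dotProduct, dotProduct_comm, mul_comm]
  have hMpν : ν ⬝ᵥ Mp.mulVec ν = σ * (ν ⬝ᵥ Mm.mulVec ν) := by
    rw [← hflux]; simp [mul_comm]
  have htrd : Mm.trace - Mp.trace = (1 - σ) * (ν ⬝ᵥ Mm.mulVec ν) := by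
    rw [htr Mm, htr Mp, htan₁, htan₂, hMpν]; ring
  ext i
  fin_cases i <;>
    simp [Matrix.sub_mulVec, Matrix.smul_mulVec, dotProduct_sub,
      dotProduct_smul, key₁, keyt t₁ htan₁, keyt t₂ htan₂, htrd, hνν,
      dotProduct_comm t₁ ν, dotProduct_comm t₂ ν, hνt₁, hνt₂] <;> ring
end
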